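/- Let r be an odd prime and k an integer with gcd(k, 2r) = 1 and 0 < k < 2r. Then the product sin((r−1)πk/r)·sin(πk/r) / (sin((r+1)πk/(2r))·sin((r−1)πk/(2r))) is positive. -/
import Mathlib

open Real

/-- For an odd prime `r` and `0 < k < 2r` with `gcd(k, 2r) = 1`, the quantity
`sin((r−1)πk/r)·sin(πk/r) / (sin((r+1)πk/(2r))·sin((r−1)πk/(2r)))` is positive. -/
theorem stmt_7 (r k : ℕ) (hr : r.Prime) (hodd : Odd r)
    (hk : Nat.gcd k (2 * r) = 1) (hk0 : 0 < k) (hk2r : k < 2 * r) :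
    0 < Real.sin ((r - 1 : ℝ) * π * k / r) * Real.sin (π * k / r) /
        (Real.sin ((r + 1 : ℝ) * π * k / (2 * r)) *
          Real.sin ((r - 1 : ℝ) * π * k / (2 * r))) := by
  have hr1 : 1 < r := hr.one_lt
  have hrR : (0:ℝ) < r := by exact_mod_cast hr.pos
  have hrne : (r:ℝ) ≠ 0 := ne_of_gt hrR
  have hpi := Real.pi_pos
  -- k is odd
  have hk2 : Nat.Coprime k 2 := Nat.Coprime.coprime_dvd_right ⟨r, rfl⟩ hk
  have hkodd : Odd k := by
    rcases Nat.even_or_odd k with he | ho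
    · exfalso; rcases he with ⟨m, hm⟩
      have : (2:ℕ) ∣ Nat.gcd k (2*r) := Nat.dvd_gcd ⟨m, by omega⟩ ⟨r, rfl⟩
      rw [hk] at this; omega
    · exact ho
  obtain ⟨m, hm⟩ := hkodd
  -- r does not divide k
  have hrk : ¬ (r ∣ k) := by
    intro h
    have : r ∣ Nat.gcd k (2*r) := Nat.dvd_gcd h ⟨2, by ring⟩
    rw [hk] at this
    exact absurd (Nat.le_of_dvd one_pos this) (by omega)
  have hrkZ : ¬ ((r:ℤ) ∣ (k:ℤ)) := by exact_mod_cast hrk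
  -- numerator
  have hnum1 : ((r:ℝ) - 1) * π * k / r = π * k - π * k / r := by
    field_simp
  have hsin1 : Real.sin (π * k - π * k / r) = Real.sin (π * k / r) := by
    have : π * k - π * k / r = (π - π * k / r) + (m : ℤ) * (2 * π) := by
      push_cast [hm]; ring
    rw [this, Real.sin_add_int_mul_two_pi, Real.sin_pi_sub]
  have hsne : Real.sin (π * k / r) ≠ 0 := by
    intro h
    obtain ⟨n, hn⟩ := Real.sin_eq_zero_iff.mp h
    have : (k:ℝ) = n * r := by
      field_simp at hn
      nlinarith [Real.pi_pos]
    have : (k:ℤ) = n * r := by exact_mod_cast this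
    exact hrkZ ⟨n, by linarith⟩
  have hnum : 0 < Real.sin ((r - 1 : ℝ) * π * k / r) * Real.sin (π * k / r) := by
    rw [hnum1, hsin1, ← sq]
    exact sq_pos_of_ne_zero hsne
  -- denominator
  set A := π * k / 2 with hA
  set B := π * k / (2 * r) with hB
  have hd1 : ((r:ℝ) + 1) * π * k / (2 * r) = A + B := by
    rw [hA, hB]; field_simp
  have hd2 : ((r:ℝ) - 1) * π * k / (2 * r) = A - B := by
    rw [hA, hB]; field_simp
  have hcosA : Real.cos A = 0 := by
    rw [Real.cos_eq_zero_iff]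
    exact ⟨m, by rw [hA]; push_cast [hm]; ring⟩
  have hsinA : Real.sin A ^ 2 = 1 := by
    have := Real.sin_sq_add_cos_sq A
    rw [hcosA] at this; nlinarith
  have hcosB : Real.cos B ≠ 0 := by
    intro h
    obtain ⟨n, hn⟩ := Real.cos_eq_zero_iff.mp h
    rw [hB] at hn
    have : (k:ℝ) = (2 * n + 1) * r := by
      field_simp at hn
      nlinarith [Real.pi_pos]
    have : (k:ℤ) = (2 * n + 1) * r := by exact_mod_cast this
    exact hrkZ ⟨2 * n + 1, by linarith⟩
  have hden : Real.sin ((r + 1 : ℝ) * π * k / (2 * r)) *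
      Real.sin ((r - 1 : ℝ) * π * k / (2 * r)) = Real.cos B ^ 2 := by
    rw [hd1, hd2, Real.sin_add, Real.sin_sub, hcosA]
    linear_combination Real.cos B ^ 2 * hsinA
  rw [hden]
  exact div_pos hnum (sq_pos_of_ne_zero hcosB)
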